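/- For every point x of a topological space X, the singleton {x} is quasi e*-θ-closed, i.e., whenever {x} ⊆ U with U e*-θ-open, we have e*-cl_θ({x}) ⊆ U. -/

import Mathlib

/-!
If `y ∈ e*-cl_θ {x}` then `y` lies in the e*-closure of every e*-open `V ∋ x`: otherwise
`(e*-cl V)ᶜ` is an e*-open neighbourhood of `y` whose e*-closure lies in `Vᶜ` and so misses `x`.
An e*-θ-open `U ∋ x` contains `e*-cl V` for some such `V`, hence contains `y`.
-/

open Set Topology

variable {X : Type*} [TopologicalSpace X]

/-- δ-closure of A. -/
def deltaCl (A : Set X) : Set X :=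
  {x | ∀ U : Set X, IsOpen U → x ∈ U → (interior (closure U) ∩ A).Nonempty}

/-- A is e*-open if A ⊆ cl(int(δ-cl A)). -/
def EStarOpen (A : Set X) : Prop := A ⊆ closure (interior (deltaCl A))

/-- A is e*-closed if its complement is e*-open. -/
def EStarClosed (A : Set X) : Prop := EStarOpen Aᶜ

/-- e*-closure: intersection of all e*-closed supersets. -/
def eStarCl (A : Set X) : Set X := ⋂₀ {F | EStarClosed F ∧ A ⊆ F}

/-- e*-interior: union of all e*-open subsets. -/
def eStarInt (A : Set X) : Set X := ⋃₀ {U | EStarOpen U ∧ U ⊆ A}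

/-- e*-regular: both e*-open and e*-closed. -/
def EStarRegular (A : Set X) : Prop := EStarOpen A ∧ EStarClosed A

/-- e*-θ-closure. -/
def eStarClTheta (A : Set X) : Set X :=
  {x | ∀ U : Set X, EStarOpen U → x ∈ U → (eStarCl U ∩ A).Nonempty}

/-- e*-θ-closed. -/
def EStarThetaClosed (A : Set X) : Prop := A = eStarClTheta A

/-- e*-θ-open. -/
def EStarThetaOpen (A : Set X) : Prop := EStarThetaClosed Aᶜ

/-- quasi e*-θ-closed. -/
def QEStarThetaClosed (A : Set X) : Prop :=
  ∀ U : Set X, EStarThetaOpen U → A ⊆ U → eStarClTheta A ⊆ U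

/-- e*-θ-kernel. -/
def eStarKerTheta (A : Set X) : Set X := ⋂₀ {U | EStarThetaOpen U ∧ A ⊆ U}

lemma deltaCl_mono {A B : Set X} (h : A ⊆ B) : deltaCl A ⊆ deltaCl B :=
  fun _ hz U hU hzU => (hz U hU hzU).mono (inter_subset_inter_right _ h)

lemma eStarOpen_sUnion {S : Set (Set X)} (h : ∀ A ∈ S, EStarOpen A) : EStarOpen (⋃₀ S) := by
  rintro z ⟨A, hA, hzA⟩
  exact closure_mono (interior_mono (deltaCl_mono (subset_sUnion_of_mem hA))) (h A hA hzA)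

lemma eStarClosed_compl_iff {A : Set X} : EStarClosed Aᶜ ↔ EStarOpen A := by
  rw [EStarClosed, compl_compl]

lemma subset_eStarCl (A : Set X) : A ⊆ eStarCl A :=
  fun _ hz _ hF => hF.2 hz

lemma eStarCl_subset_of_eStarClosed {A F : Set X} (hF : EStarClosed F) (hAF : A ⊆ F) :
    eStarCl A ⊆ F :=
  sInter_subset_of_mem ⟨hF, hAF⟩

lemma eStarClosed_eStarCl (A : Set X) : EStarClosed (eStarCl A) := by
  rw [EStarClosed, eStarCl, compl_sInter]
  exact eStarOpen_sUnion <| forall_mem_image.2 fun F hF => by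
    rw [← eStarClosed_compl_iff, compl_compl]
    exact hF.1

lemma eStarCl_compl_eStarCl_subset {V : Set X} (hV : EStarOpen V) :
    eStarCl (eStarCl V)ᶜ ⊆ Vᶜ :=
  eStarCl_subset_of_eStarClosed (eStarClosed_compl_iff.2 hV)
    (compl_subset_compl.2 (subset_eStarCl V))

lemma exists_eStarOpen_eStarCl_subset {U : Set X} (hU : EStarThetaOpen U) {x : X} (hx : x ∈ U) :
    ∃ V, EStarOpen V ∧ x ∈ V ∧ eStarCl V ⊆ U := by
  by_contra! h
  have hxU : x ∈ eStarClTheta Uᶜ := fun V hV hxV => inter_compl_nonempty_iff.2 (h V hV hxV)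
  rw [← hU] at hxU
  exact hxU hx

lemma mem_eStarCl_of_mem_eStarClTheta_singleton {x y : X} (hy : y ∈ eStarClTheta {x})
    {V : Set X} (hV : EStarOpen V) (hxV : x ∈ V) : y ∈ eStarCl V := by
  by_contra hyV
  have hx : x ∈ eStarCl (eStarCl V)ᶜ :=
    inter_singleton_nonempty.1 (hy _ (eStarClosed_eStarCl V) hyV)
  exact eStarCl_compl_eStarCl_subset hV hx hxV

theorem stmt15 (x : X) : QEStarThetaClosed ({x} : Set X) := by
  intro U hU hxU y hy
  obtain ⟨V, hV, hxV, hVU⟩ := exists_eStarOpen_eStarCl_subset hU (hxU rfl)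
  exact hVU (mem_eStarCl_of_mem_eStarClTheta_singleton hy hV hxV)
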